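/- (Soundness, assignment case.) Suppose (μ₀,λ₀) with procedure p topmost corresponds to ⟨ρ₀,θ₀⟩ and (μ₀,λ₀,l₀ := e) ⇓ (μ',λ'). If l₀ ∈ dom(μ₀) (a global location), then rule UPDATE-HEAP yields μ' = μ₀[l₀ := v], λ' = λ₀, rule P-UPDATE yields ρ' = ρ₀[l₀ := e], η'(p) = η₀(p), and (μ',λ') corresponds to ⟨ρ',θ'⟩. If l₀ ∈ dom(λ₀) and l₀ corresponds to local variable x₀ of p, then rule UPDATE-STACK yields μ' = μ₀, λ' = λ₀[l₀ := v], rule P-UPDATE yields ρ' = ρ₀, η'(p) = η₀(p)[x₀ := e], and again (μ',λ') corresponds to ⟨ρ',θ'⟩: for all l ∈ dom(μ), μ'(l) = ρ'[l], and for all l ∈ dom(λ') corresponding to a local variable x of p, λ'(l) = η'(p)[x]. -/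

import Mathlib

abbrev Loc := ℕ
abbrev Val := ℤ
abbrev Var := String

/-- Correspondence between an operational configuration (μ,λ) (with
procedure p topmost) and a pushdown state (ρ, η(p)), relative to the
location/local-variable correspondence `G`. -/
def Corresponds (G : Loc → Option Var) (μ lam : Loc → Option Val)
    (ρ : Loc → Val) (η : Var → Val) : Prop :=
  (∀ l, (μ l).isSome → μ l = some (ρ l)) ∧
  (∀ l x, (lam l).isSome → G l = some x → lam l = some (η x))

namespace Corresponds

variable {G : Loc → Option Var} {μ lam : Loc → Option Val} {ρ : Loc → Val} {η : Var → Val}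

theorem update_heap (h : Corresponds G μ lam ρ η) (l₀ : Loc) (v : Val) :
    Corresponds G (Function.update μ l₀ (some v)) lam (Function.update ρ l₀ v) η := by
  refine ⟨fun l hl => ?_, h.2⟩
  by_cases hl₀ : l = l₀
  · subst hl₀
    simp
  · simp only [Function.update_of_ne hl₀] at hl ⊢
    exact h.1 l hl

/-- Since `l₀` is the only location corresponding to `x₀`, updating `η` at `x₀` is invisible from
every other stack location. -/
theorem update_stack (h : Corresponds G μ lam ρ η) {l₀ : Loc} {x₀ : Var}
    (hG : ∀ l, G l = some x₀ → l = l₀) (hl₀ : G l₀ = some x₀) (v : Val) :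
    Corresponds G μ (Function.update lam l₀ (some v)) ρ (Function.update η x₀ v) := by
  refine ⟨h.1, fun l x hl hx => ?_⟩
  by_cases hll₀ : l = l₀
  · subst hll₀
    obtain rfl : x = x₀ := Option.some_injective _ (hx.symm.trans hl₀)
    simp
  · have hxx₀ : x ≠ x₀ := by
      rintro rfl
      exact hll₀ (hG l hx)
    simp only [Function.update_of_ne hll₀, Function.update_of_ne hxx₀] at hl ⊢
    exact h.2 l x hl hx

end Corresponds

theorem soundness_update (G : Loc → Option Var)
    (hGinj : ∀ l₁ l₂ x, G l₁ = some x → G l₂ = some x → l₁ = l₂)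
    (μ₀ lam₀ μ' lam' : Loc → Option Val)
    (ρ₀ ρ' : Loc → Val) (η₀ η' : Var → Val)
    (l₀ : Loc) (v : Val)
    (hcorr : Corresponds G μ₀ lam₀ ρ₀ η₀)
    (hcases :
      -- case l₀ ∈ dom(μ₀): rules UPDATE-HEAP and P-UPDATE (global branch)
      ((μ₀ l₀).isSome ∧ μ' = Function.update μ₀ l₀ (some v) ∧ lam' = lam₀ ∧
        ρ' = Function.update ρ₀ l₀ v ∧ η' = η₀) ∨
      -- case l₀ ∈ dom(λ₀), l₀ corresponds to local variable x₀ of p: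
      -- rules UPDATE-STACK and P-UPDATE (local branch)
      (∃ x₀, (lam₀ l₀).isSome ∧ G l₀ = some x₀ ∧ μ' = μ₀ ∧
        lam' = Function.update lam₀ l₀ (some v) ∧
        ρ' = ρ₀ ∧ η' = Function.update η₀ x₀ v)) :
    Corresponds G μ' lam' ρ' η' := by
  rcases hcases with ⟨-, rfl, rfl, rfl, rfl⟩ | ⟨x₀, -, hG, rfl, rfl, rfl, rfl⟩
  · exact hcorr.update_heap l₀ v
  · exact hcorr.update_stack (fun l hl => hGinj l l₀ x₀ hl hG) hG v
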